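/- Let η be a symmetric nondegenerate N×N complex matrix and let K be a hamiltonian operator whose constant term vanishes (K_0 = 0 in the expansion K = Σ_{i≥0} K_i ∂_x^i) and whose coefficients do not depend on u^1 (∂K/∂u^1 = 0, i.e. all coefficients are annihilated by ∂/∂u^1). Let ḡ_μ ∈ Λ̂_N^{[0]}, 1 ≤ μ ≤ N, be local functionals with ∂ḡ_μ/∂u^1 = ∫ η_{μν}u^ν dx, and let 𝒬 ∈ Â_N^{[−2]} be a differential polynomial such that ∂𝒬/∂u^1 is a constant. Then the differential polynomials 𝒬^α := η^{αμ}∂_x{𝒬, ḡ_μ}_K satisfy ∂𝒬^α/∂u^1 = 0 for every α. -/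

import Mathlib

/-!
Common formal framework for the theory of differential polynomials, local
functionals and tau-structures, following Buryak–Dubrovin–Guéré–Rossi.

Variables of the algebra of differential polynomials: `Sum.inl (α, i)` stands
for `u^α_i` (with `u^α = u^α_0`) and `Sum.inr ()` stands for `ε`.  The paper's
index `1` (the unit direction) corresponds to `(0 : Fin N)` here.
-/

/-- The variables of the algebra of differential polynomials. -/
abbrev DVar (N : ℕ) : Type := (Fin N × ℕ) ⊕ Unit

/-- The ring `Â_N` of (extended) differential polynomials, realized inside the
ring of formal power series in the variables `u^α_i` and `ε`. -/
abbrev DP (N : ℕ) : Type := MvPowerSeries (DVar N) ℂ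

namespace DP

variable {N : ℕ}

/-- Coefficient of a monomial. -/
noncomputable def co (f : DP N) (m : DVar N →₀ ℕ) : ℂ :=
  MvPowerSeries.coeff (R := ℂ) m f

/-- Build a power series from its coefficients. -/
def ofCo (F : (DVar N →₀ ℕ) → ℂ) : DP N := F

/-- The variable `u^α_i`. -/
noncomputable def uv (α : Fin N) (i : ℕ) : DP N :=
  MvPowerSeries.X (Sum.inl (α, i))

/-- The variable `ε`. -/
noncomputable def eps : DP N := MvPowerSeries.X (Sum.inr ())

/-- The partial derivative `∂/∂v` with respect to one of the variables. -/
noncomputable def pd (v : DVar N) (f : DP N) : DP N :=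
  ofCo fun m => ((m v : ℂ) + 1) * co f (m + Finsupp.single v 1)

/-- The spatial derivative `∂_x = Σ_{α,i} u^α_{i+1} ∂/∂u^α_i`. -/
noncomputable def dx (f : DP N) : DP N :=
  ofCo fun m =>
    ∑ v ∈ m.support,
      (match v with
        | Sum.inl (α, i + 1) =>
            co (pd (Sum.inl (α, i)) f) (m - Finsupp.single (Sum.inl (α, i + 1)) 1)
        | _ => (0 : ℂ))

/-- The variational derivative `δ/δu^μ = Σ_{i≥0} (−∂_x)^i ∘ ∂/∂u^μ_i`. -/
noncomputable def vd (μ : Fin N) (f : DP N) : DP N :=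
  ofCo fun m => ∑ᶠ i : ℕ, ((-1 : ℂ) ^ i) * co (dx^[i] (pd (Sum.inl (μ, i)) f)) m

/-- The weighted degree of a monomial: `deg u^α_i = i`, `deg ε = −1`. -/
noncomputable def wdeg (m : DVar N →₀ ℕ) : ℤ :=
  ∑ v ∈ m.support,
    (match v with
      | Sum.inl (_, i) => (i : ℤ)
      | Sum.inr _ => (-1 : ℤ)) * (m v : ℤ)

/-- Degree-`k` homogeneity (membership in `Â_N^{[k]}`). -/
def IsHomog (k : ℤ) (f : DP N) : Prop :=
  ∀ m, co f m ≠ 0 → wdeg m = k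

/-- Being a constant, i.e. an element of `ℂ[[ε]]`. -/
def IsConst (f : DP N) : Prop :=
  ∀ m, co f m ≠ 0 → ∀ v ∈ m.support, v = Sum.inr ()

/-- Vanishing of the evaluation at `u^*_* = 0`. -/
def VanishAtU0 (f : DP N) : Prop :=
  ∀ k : ℕ, co f (Finsupp.single (Sum.inr ()) k) = 0

/-- Being a genuine differential polynomial: in each ε-degree at most `e`,
polynomiality (bounded degree, boundedly many variables) in the jet
variables `u^α_i`, `i ≥ 1`. -/
def IsDiffPoly (f : DP N) : Prop :=
  ∀ e : ℕ, ∃ D : ℕ, ∀ m, co f m ≠ 0 → m (Sum.inr ()) ≤ e →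
    ((∑ v ∈ m.support,
        (match v with
          | Sum.inl (_, _ + 1) => m v
          | _ => 0)) ≤ D) ∧
      ∀ (α : Fin N) (i : ℕ), D < i → m (Sum.inl (α, i)) = 0

/-- The submodule of constants `ℂ[[ε]] ⊆ Â_N`. -/
noncomputable def constSub (N : ℕ) : Submodule ℂ (DP N) where
  carrier := {f | IsConst f}
  add_mem' := by
    intro f g hf hg m hm
    have hco : co (f + g) m = co f m + co g m := map_add _ _ _
    by_cases h1 : co f m = 0
    · have h2 : co g m ≠ 0 := by
        intro h2; exact hm (by rw [hco, h1, h2, add_zero])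
      exact hg m h2
    · exact hf m h1
  zero_mem' := by
    intro m hm
    exact (hm (map_zero (MvPowerSeries.coeff (R := ℂ) m))).elim
  smul_mem' := by
    intro c f hf m hm
    have hne : co f m ≠ 0 := by
      intro h
      apply hm
      have hsm : co (c • f) m = c * co f m := by
        simp [co]
      rw [hsm, h, mul_zero]
    exact hf m hne

/-- The submodule `ℂ[[ε]] + ∂_x(Â_N)` by which one quotients to get local
functionals. -/
noncomputable def lfSub (N : ℕ) : Submodule ℂ (DP N) :=
  constSub N ⊔ Submodule.span ℂ (Set.range (dx : DP N → DP N))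

/-- The space `Λ̂_N` of local functionals. -/
abbrev LF (N : ℕ) := DP N ⧸ lfSub N

/-- The projection `f ↦ ∫ f dx`. -/
noncomputable def intg : DP N →ₗ[ℂ] LF N := (lfSub N).mkQ

/-- A choice of density for a local functional. -/
noncomputable def rep (h : LF N) : DP N :=
  (Submodule.Quotient.mk_surjective (lfSub N) h).choose

/-- The variational derivative `δ/δu^μ` of a local functional. -/
noncomputable def vdQ (μ : Fin N) (h : LF N) : DP N := vd μ (rep h)

/-- The partial derivative `∂/∂v` of a local functional. -/
noncomputable def pdQ (v : DVar N) (h : LF N) : LF N := intg (pd v (rep h))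

/-- The degree-`k` local functionals `Λ̂_N^{[k]}`. -/
noncomputable def LFHomog (N : ℕ) (k : ℤ) : Set (LF N) :=
  intg '' {f : DP N | IsHomog k f ∧ IsDiffPoly f}

/-- The operator `K = η ∂_x` applied to a tuple of differential polynomials. -/
noncomputable def etaAp (η : Matrix (Fin N) (Fin N) ℂ) (α : Fin N)
    (g : Fin N → DP N) : DP N :=
  ∑ ν : Fin N, η α ν • dx (g ν)

/-- The bracket `{f̄, ḡ}_{η∂_x}` of local functionals. -/
noncomputable def lfbEta (η : Matrix (Fin N) (Fin N) ℂ) (f g : LF N) : LF N :=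
  intg (∑ μ : Fin N, vdQ μ f * etaAp η μ fun ν => vdQ ν g)

/-- The bracket `{f, h̄}_{η∂_x}` of a differential polynomial with a local
functional. -/
noncomputable def pbEta (η : Matrix (Fin N) (Fin N) ℂ) (f : DP N) (h : LF N) : DP N :=
  ofCo fun m => ∑ γ : Fin N, ∑ᶠ n : ℕ,
    co (pd (Sum.inl (γ, n)) f * dx^[n] (etaAp η γ fun μ => vdQ μ h)) m

/-- A general operator `K^{γν} = Σ_j K^{γν}_j ∂_x^j` applied to a tuple of
differential polynomials. -/
noncomputable def Kap (K : Fin N → Fin N → ℕ → DP N) (γ : Fin N)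
    (g : Fin N → DP N) : DP N :=
  ∑ ν : Fin N, ofCo fun m => ∑ᶠ j : ℕ, co (K γ ν j * dx^[j] (g ν)) m

/-- The bracket `{f̄, ḡ}_K` of local functionals. -/
noncomputable def lfbK (K : Fin N → Fin N → ℕ → DP N) (f g : LF N) : LF N :=
  intg (∑ μ : Fin N, vdQ μ f * Kap K μ fun ν => vdQ ν g)

/-- The bracket `{f, h̄}_K` of a differential polynomial with a local
functional. -/
noncomputable def pbK (K : Fin N → Fin N → ℕ → DP N) (f : DP N) (h : LF N) : DP N :=
  ofCo fun m => ∑ γ : Fin N, ∑ᶠ n : ℕ,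
    co (pd (Sum.inl (γ, n)) f * dx^[n] (Kap K γ fun μ => vdQ μ h)) m

/-- Being a hamiltonian operator. -/
structure IsHamOp (K : Fin N → Fin N → ℕ → DP N) : Prop where
  finite : ∀ γ ν, ∃ J : ℕ, ∀ j, J ≤ j → K γ ν j = 0
  deg : ∀ (γ ν : Fin N) (j : ℕ), IsHomog (1 - (j : ℤ)) (K γ ν j)
  poly : ∀ γ ν j, IsDiffPoly (K γ ν j)
  antisym : ∀ f g : LF N, lfbK K f g = -lfbK K g f
  jacobi : ∀ f g h : LF N,
    lfbK K (lfbK K f g) h + lfbK K (lfbK K g h) f + lfbK K (lfbK K h f) g = 0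

/-- A hamiltonian hierarchy: a hamiltonian operator together with pairwise
commuting Hamiltonians `h̄_{β,q} ∈ Λ̂^{[0]}_N` such that `h̄_{1,0}` generates the
spatial translations. -/
structure IsHierarchy [NeZero N] (K : Fin N → Fin N → ℕ → DP N)
    (H : Fin N → ℕ → LF N) : Prop where
  ham : IsHamOp K
  mem : ∀ β q, H β q ∈ LFHomog N 0
  comm : ∀ β q γ p, lfbK K (H β q) (H γ p) = 0
  transl : ∀ α, Kap K α (fun μ => vdQ μ (H 0 0)) = uv α 1

/-- A tau-structure for a hamiltonian hierarchy.  Here `h β q` denotes the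
tau-symmetric density `h_{β,q-1}` (an index shift by one). -/
structure IsTauStructure [NeZero N] (K : Fin N → Fin N → ℕ → DP N)
    (H : Fin N → ℕ → LF N) (h : Fin N → ℕ → DP N) : Prop where
  mem : ∀ β q, IsHomog 0 (h β q) ∧ IsDiffPoly (h β q)
  casimir : ∀ β α, Kap K α (fun μ => vdQ μ (intg (h β 0))) = 0
  indep : LinearIndependent ℂ fun β : Fin N => intg (h β 0)
  nondeg : Matrix.det (Matrix.of fun α β : Fin N => co (K α β 1) 0) ≠ 0
  dens : ∀ β q, intg (h β (q + 1)) = H β q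
  tausym : ∀ α β p q, pbK K (h α p) (H β q) = pbK K (h β q) (H α p)

end DP

/-!
`∂/∂u^1` commutes with `∂_x` and with every `δ/δu^ν`, and `δ/δu^ν` kills constants and total
derivatives. Hence `∂/∂u^1 (δḡ_μ/δu^ν) = δ/δu^ν ∫ η_{μν'} u^{ν'} dx = η_{μν}` is a constant, so
`∂_x^j (δḡ_μ/δu^ν)` does not involve `u^1` for `j ≥ 1`. Neither do the coefficients `K_j`
(`K_0 = 0`) nor the `∂𝒬/∂u^γ_n` (because `∂𝒬/∂u^1` is constant), and every term of
`∂_x{𝒬, ḡ_μ}_K` is built from these by products, sums and `∂_x`, all of which preserve the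
subalgebra of series not involving `u^1 = u^1_0`.
-/

namespace DP

variable {N : ℕ}

section Coefficients

@[simp] lemma co_ofCo (F : (DVar N →₀ ℕ) → ℂ) (m : DVar N →₀ ℕ) : co (ofCo F) m = F m := rfl

@[simp] lemma co_zero (m : DVar N →₀ ℕ) : co (0 : DP N) m = 0 := map_zero _

@[simp] lemma co_add (f g : DP N) (m : DVar N →₀ ℕ) : co (f + g) m = co f m + co g m :=
  map_add _ _ _

@[simp] lemma co_smul (c : ℂ) (f : DP N) (m : DVar N →₀ ℕ) : co (c • f) m = c * co f m :=
  map_smul (MvPowerSeries.coeff (R := ℂ) m) c f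

lemma co_mul (f g : DP N) (m : DVar N →₀ ℕ) :
    co (f * g) m = ∑ p ∈ Finset.HasAntidiagonal.antidiagonal m, co f p.1 * co g p.2 :=
  MvPowerSeries.coeff_mul m f g

lemma ext_co {f g : DP N} (h : ∀ m, co f m = co g m) : f = g := MvPowerSeries.ext h

end Coefficients

section PartialDerivative

lemma co_pd (v : DVar N) (f : DP N) (m : DVar N →₀ ℕ) :
    co (pd v f) m = ((m v : ℂ) + 1) * co f (m + Finsupp.single v 1) := rfl

lemma pd_add (v : DVar N) (f g : DP N) : pd v (f + g) = pd v f + pd v g :=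
  ext_co fun m => by simp only [co_pd, co_add]; ring

lemma pd_smul (v : DVar N) (c : ℂ) (f : DP N) : pd v (c • f) = c • pd v f :=
  ext_co fun m => by simp only [co_pd, co_smul]; ring

lemma pd_comm (v w : DVar N) (f : DP N) : pd v (pd w f) = pd w (pd v f) := by
  refine ext_co fun m => ?_
  simp only [co_pd, add_right_comm m (Finsupp.single v 1), Finsupp.add_apply,
    Finsupp.single_apply]
  by_cases hvw : v = w
  · subst hvw; ring
  · simp only [hvw, Ne.symm hvw, if_false, add_zero]; ring

lemma pd_X (v w : DVar N) : pd v (MvPowerSeries.X w) = if v = w then 1 else 0 := by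
  classical
  refine ext_co fun m => ?_
  rw [co_pd]
  simp only [co, MvPowerSeries.coeff_X]
  by_cases hvw : v = w
  · subst hvw
    by_cases hm : m = 0
    · simp [hm]
    · simp [hm, MvPowerSeries.coeff_one]
  · have : m + Finsupp.single v 1 ≠ Finsupp.single w 1 := fun h => by
      simpa [Ne.symm hvw] using DFunLike.congr_fun h v
    simp [this, hvw]

lemma IsConst.pd_inl_eq_zero {c : DP N} (hc : IsConst c) (p : Fin N × ℕ) :
    pd (Sum.inl p) c = 0 := by
  refine ext_co fun m => ?_
  rw [co_pd, co_zero, mul_eq_zero]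
  right
  by_contra h
  simpa using hc _ h (Sum.inl p) (by simp)

lemma isConst_one : IsConst (1 : DP N) := by
  intro m hm v hv
  rw [co, MvPowerSeries.coeff_one] at hm
  simp_all

end PartialDerivative

section SpatialDerivative

/-- The contribution of the variable `v = u^α_{i+1}` to the coefficient of `m` in `∂_x f`. It is
zero when `v` does not occur in `m`, so the sum may run over any superset of `m.support`. -/
noncomputable def dxTerm (f : DP N) (m : DVar N →₀ ℕ) : DVar N → ℂ
  | Sum.inl (α, i + 1) =>
      if m (Sum.inl (α, i + 1)) = 0 then 0
      else co (pd (Sum.inl (α, i)) f) (m - Finsupp.single (Sum.inl (α, i + 1)) 1)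
  | _ => 0

lemma co_dx_eq_sum {f : DP N} {m : DVar N →₀ ℕ} {S : Finset (DVar N)} (hS : m.support ⊆ S) :
    co (dx f) m = ∑ v ∈ S, dxTerm f m v := by
  refine Eq.trans (Finset.sum_congr rfl fun v hv => ?_) (Finset.sum_subset hS fun v _ hv => ?_)
  · rw [Finsupp.mem_support_iff] at hv
    rcases v with ⟨α, _ | i⟩ | _ <;> simp [dxTerm, hv]
  · rw [Finsupp.notMem_support_iff] at hv
    rcases v with ⟨α, _ | i⟩ | _ <;> simp [dxTerm, hv]

lemma co_dx (f : DP N) (m : DVar N →₀ ℕ) : co (dx f) m = ∑ v ∈ m.support, dxTerm f m v :=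
  co_dx_eq_sum subset_rfl

lemma dx_add (f g : DP N) : dx (f + g) = dx f + dx g := by
  refine ext_co fun m => ?_
  simp only [co_add, co_dx, ← Finset.sum_add_distrib]
  refine Finset.sum_congr rfl fun v _ => ?_
  rcases v with ⟨α, _ | i⟩ | _ <;> simp only [dxTerm, pd_add, co_add, add_zero]
  split_ifs <;> simp

lemma dx_smul (c : ℂ) (f : DP N) : dx (c • f) = c • dx f := by
  refine ext_co fun m => ?_
  simp only [co_smul, co_dx, Finset.mul_sum]
  refine Finset.sum_congr rfl fun v _ => ?_
  rcases v with ⟨α, _ | i⟩ | _ <;> simp only [dxTerm, pd_smul, co_smul, mul_zero]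
  split_ifs <;> simp

noncomputable def dxₗ : DP N →ₗ[ℂ] DP N where
  toFun := dx
  map_add' := dx_add
  map_smul' := dx_smul

@[simp] lemma coe_dxₗ : ⇑(dxₗ : DP N →ₗ[ℂ] DP N) = dx := rfl

lemma dx_iterate_add (n : ℕ) (f g : DP N) : dx^[n] (f + g) = dx^[n] f + dx^[n] g :=
  iterate_map_add dxₗ n f g

lemma dx_iterate_smul (n : ℕ) (c : ℂ) (f : DP N) : dx^[n] (c • f) = c • dx^[n] f := by
  simpa only [Module.End.pow_apply, coe_dxₗ] using (dxₗ ^ n).map_smul c f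

lemma dx_iterate_zero (n : ℕ) : dx^[n] (0 : DP N) = 0 :=
  iterate_map_zero dxₗ n

lemma IsConst.dx_eq_zero {c : DP N} (hc : IsConst c) : dx c = 0 := by
  refine ext_co fun m => ?_
  rw [co_dx, co_zero]
  refine Finset.sum_eq_zero fun v _ => ?_
  rcases v with ⟨α, _ | i⟩ | _ <;> simp [dxTerm, hc.pd_inl_eq_zero]

end SpatialDerivative

section Commutator

lemma add_single_tsub_single_comm {v w : DVar N} (hvw : v ≠ w) (m : DVar N →₀ ℕ) :
    m + Finsupp.single w 1 - Finsupp.single v 1 = m - Finsupp.single v 1 + Finsupp.single w 1 := by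
  ext x
  simp only [Finsupp.add_apply, Finsupp.tsub_apply, Finsupp.single_apply]
  split_ifs <;> simp_all

lemma dxTerm_pd_of_ne {v w : DVar N} (hvw : v ≠ w) (f : DP N) (m : DVar N →₀ ℕ) :
    dxTerm (pd w f) m v = ((m w : ℂ) + 1) * dxTerm f (m + Finsupp.single w 1) v := by
  rcases v with ⟨α, _ | i⟩ | _
  · simp [dxTerm]
  · have hmv : (m + Finsupp.single w 1 : DVar N →₀ ℕ) (Sum.inl (α, i + 1))
        = m (Sum.inl (α, i + 1)) := by
      simp [Ne.symm hvw]
    have hmw : (m - Finsupp.single (Sum.inl (α, i + 1)) 1 : DVar N →₀ ℕ) w = m w := by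
      simp [hvw]
    simp only [dxTerm, hmv]
    rw [pd_comm _ w, co_pd w (pd (Sum.inl (α, i)) f), hmw, add_single_tsub_single_comm hvw]
    split_ifs <;> simp
  · simp [dxTerm]

lemma dxTerm_pd_self (w : DVar N) (f : DP N) (m : DVar N →₀ ℕ) :
    dxTerm (pd w f) m w = (m w : ℂ) * dxTerm f (m + Finsupp.single w 1) w := by
  rcases w with ⟨α, _ | i⟩ | _
  · simp [dxTerm]
  · simp only [dxTerm, Finsupp.add_apply, Finsupp.single_eq_same, add_tsub_cancel_right,
      Nat.add_one_ne_zero, if_false]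
    set w : DVar N := Sum.inl (α, i + 1)
    split_ifs with hm
    · simp [hm]
    · have h1 : 1 ≤ m w := Nat.one_le_iff_ne_zero.mpr hm
      rw [pd_comm _ w, co_pd w, Finsupp.tsub_apply, Finsupp.single_eq_same,
        tsub_add_cancel_of_le (Finsupp.single_le_iff.mpr h1), Nat.cast_sub h1]
      ring
  · simp [dxTerm]

/-- Coefficientwise form of `[∂/∂w, ∂_x] = ∂/∂(w - 1)`; the last term vanishes unless
`w = u^α_{i+1}`. -/
lemma co_pd_dx (w : DVar N) (f : DP N) (m : DVar N →₀ ℕ) :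
    co (pd w (dx f)) m = co (dx (pd w f)) m + dxTerm f (m + Finsupp.single w 1) w := by
  classical
  set S := insert w m.support
  have hS : (m + Finsupp.single w 1).support ⊆ S := fun v hv => by
    by_cases hvw : v = w
    · exact hvw ▸ Finset.mem_insert_self _ _
    · refine Finset.mem_insert_of_mem ?_
      simpa [Finsupp.single_apply, Ne.symm hvw] using hv
  rw [co_pd, co_dx_eq_sum hS, co_dx_eq_sum (Finset.subset_insert w m.support),
    ← Finset.add_sum_erase S _ (Finset.mem_insert_self _ _),
    ← Finset.add_sum_erase S _ (Finset.mem_insert_self _ _), dxTerm_pd_self,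
    Finset.sum_congr rfl fun v hv => dxTerm_pd_of_ne (Finset.ne_of_mem_erase hv) f m,
    ← Finset.mul_sum]
  ring

lemma pd_dx_zero (ν : Fin N) (f : DP N) :
    pd (Sum.inl (ν, 0)) (dx f) = dx (pd (Sum.inl (ν, 0)) f) :=
  ext_co fun m => by rw [co_pd_dx]; simp [dxTerm]

lemma pd_dx_succ (ν : Fin N) (j : ℕ) (f : DP N) :
    pd (Sum.inl (ν, j + 1)) (dx f) = dx (pd (Sum.inl (ν, j + 1)) f) + pd (Sum.inl (ν, j)) f :=
  ext_co fun m => by rw [co_pd_dx]; simp [dxTerm]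

lemma pd_dx_iterate_zero (ν : Fin N) (n : ℕ) (f : DP N) :
    pd (Sum.inl (ν, 0)) (dx^[n] f) = dx^[n] (pd (Sum.inl (ν, 0)) f) :=
  Function.Commute.iterate_right (pd_dx_zero ν) n f

end Commutator

section VariationalDerivative

/-- The total jet order `Σ i · m(u^α_i)` of a monomial. -/
noncomputable def jetWeight : (DVar N →₀ ℕ) →+ ℕ :=
  Finsupp.weight (Sum.elim Prod.snd 0)

/-- `∂_x` raises the jet weight by one. -/
lemma co_dx_iterate_eq_zero {k : ℕ} {m : DVar N →₀ ℕ} (f : DP N) (hm : jetWeight m < k) :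
    co (dx^[k] f) m = 0 := by
  induction k generalizing m with
  | zero => omega
  | succ k ih =>
    rw [Function.iterate_succ_apply', co_dx]
    refine Finset.sum_eq_zero fun v _ => ?_
    rcases v with ⟨α, _ | i⟩ | _
    · rfl
    · simp only [dxTerm]
      split_ifs with hv
      · rfl
      · have hle : Finsupp.single (Sum.inl (α, i + 1)) 1 ≤ m :=
          Finsupp.single_le_iff.mpr (Nat.one_le_iff_ne_zero.mpr hv)
        have hw := congrArg jetWeight (tsub_add_cancel_of_le hle)
        rw [co_pd, ih, mul_zero]
        simp only [jetWeight, map_add, Finsupp.weight_single, Sum.elim_inl, smul_eq_mul, one_mul]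
          at hw hm ⊢
        omega
    · rfl

lemma co_vd_eq_sum (μ : Fin N) (f : DP N) (m : DVar N →₀ ℕ) :
    co (vd μ f) m = ∑ i ∈ Finset.range (jetWeight m + 1),
      (-1 : ℂ) ^ i * co (dx^[i] (pd (Sum.inl (μ, i)) f)) m := by
  refine finsum_eq_sum_of_support_subset _ fun i hi => ?_
  by_contra h
  simp only [Finset.coe_range, Set.mem_Iio, not_lt] at h
  exact hi (by simp only [co_dx_iterate_eq_zero _ (by omega : jetWeight m < i), mul_zero])

lemma vd_add (μ : Fin N) (f g : DP N) : vd μ (f + g) = vd μ f + vd μ g :=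
  ext_co fun m => by
    simp only [co_add, co_vd_eq_sum, pd_add, dx_iterate_add, mul_add, Finset.sum_add_distrib]

lemma vd_smul (μ : Fin N) (c : ℂ) (f : DP N) : vd μ (c • f) = c • vd μ f :=
  ext_co fun m => by
    simp only [co_smul, co_vd_eq_sum, pd_smul, dx_iterate_smul, Finset.mul_sum]
    exact Finset.sum_congr rfl fun i _ => by ring

noncomputable def vdₗ (μ : Fin N) : DP N →ₗ[ℂ] DP N where
  toFun := vd μ
  map_add' := vd_add μ
  map_smul' := vd_smul μ

@[simp] lemma coe_vdₗ (μ : Fin N) : ⇑(vdₗ μ : DP N →ₗ[ℂ] DP N) = vd μ := rfl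

/-- The sum defining `δ(∂_x r)/δu^μ` telescopes, by `pd_dx_zero` and `pd_dx_succ`. -/
lemma vd_dx (μ : Fin N) (r : DP N) : vd μ (dx r) = 0 := by
  refine ext_co fun m => ?_
  set d : ℕ → ℂ := fun i => (-1 : ℂ) ^ i * co (dx^[i + 1] (pd (Sum.inl (μ, i)) r)) m
  have hterm : ∀ i, (-1 : ℂ) ^ (i + 1) * co (dx^[i + 1] (pd (Sum.inl (μ, i + 1)) (dx r))) m
      = d (i + 1) - d i := fun i => by
    rw [pd_dx_succ, dx_iterate_add, co_add, ← Function.iterate_succ_apply dx]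
    simp only [d, pow_succ]
    ring
  rw [co_vd_eq_sum, co_zero, Finset.sum_range_succ', Finset.sum_congr rfl fun i _ => hterm i,
    Finset.sum_range_sub, pow_zero, one_mul, Function.iterate_zero_apply, pd_dx_zero]
  simp only [d, co_dx_iterate_eq_zero _ (Nat.lt_succ_self _), mul_zero, zero_sub]
  simp

lemma IsConst.vd_eq_zero {c : DP N} (hc : IsConst c) (μ : Fin N) : vd μ c = 0 :=
  ext_co fun m => by simp [co_vd_eq_sum, hc.pd_inl_eq_zero, dx_iterate_zero]

lemma lfSub_le_ker_vdₗ (μ : Fin N) : lfSub N ≤ LinearMap.ker (vdₗ μ) :=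
  sup_le (fun _ hc => hc.vd_eq_zero μ)
    (Submodule.span_le.mpr (Set.range_subset_iff.mpr fun r => vd_dx μ r))

lemma vd_eq_of_intg_eq (μ : Fin N) {f g : DP N} (h : intg f = intg g) : vd μ f = vd μ g := by
  have := lfSub_le_ker_vdₗ μ ((Submodule.Quotient.eq _).mp h)
  rwa [LinearMap.mem_ker, map_sub, sub_eq_zero] at this

lemma vd_uv (μ ν : Fin N) : vd μ (uv ν 0) = if μ = ν then 1 else 0 := by
  refine ext_co fun m => ?_
  rw [co_vd_eq_sum, Finset.sum_eq_single_of_mem 0 (by simp) fun i _ hi => ?_]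
  · simp [uv, pd_X]
  · obtain ⟨j, rfl⟩ := Nat.exists_eq_succ_of_ne_zero hi
    simp [uv, pd_X, dx_iterate_zero]

lemma pd_vd (γ ν : Fin N) (f : DP N) :
    pd (Sum.inl (γ, 0)) (vd ν f) = vd ν (pd (Sum.inl (γ, 0)) f) := by
  refine ext_co fun m => ?_
  have hw : jetWeight (m + Finsupp.single (Sum.inl (γ, 0)) 1) = jetWeight m := by
    simp [jetWeight, Finsupp.weight_single]
  rw [co_pd, co_vd_eq_sum, co_vd_eq_sum, hw, Finset.mul_sum]
  refine Finset.sum_congr rfl fun i _ => ?_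
  rw [pd_comm _ (Sum.inl (γ, 0)), ← pd_dx_iterate_zero, co_pd]
  ring

lemma pd_vdQ_of_pdQ_eq {γ : Fin N} {h : LF N} {c : Fin N → ℂ}
    (hh : pdQ (Sum.inl (γ, 0)) h = intg (∑ ν, c ν • uv ν 0)) (μ : Fin N) :
    pd (Sum.inl (γ, 0)) (vdQ μ h) = c μ • 1 := by
  rw [vdQ, pd_vd, vd_eq_of_intg_eq μ hh, ← coe_vdₗ, map_sum]
  simp [vd_uv]

end VariationalDerivative

section Independence

def indepOf (v : DVar N) : Subalgebra ℂ (DP N) where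
  carrier := {f | ∀ m : DVar N →₀ ℕ, m v ≠ 0 → co f m = 0}
  mul_mem' {f g} hf hg m hm := by
    rw [co_mul]
    refine Finset.sum_eq_zero fun p hp => ?_
    have hpm : p.1 v + p.2 v = m v := by
      rw [← Finsupp.add_apply, Finset.HasAntidiagonal.mem_antidiagonal.mp hp]
    by_cases h1 : p.1 v = 0
    · rw [hg p.2 (by omega), mul_zero]
    · rw [hf p.1 h1, zero_mul]
  add_mem' {f g} hf hg m hm := by rw [co_add, hf m hm, hg m hm, add_zero]
  algebraMap_mem' c m hm := by
    classical
    rw [co, Algebra.algebraMap_eq_smul_one, map_smul, MvPowerSeries.coeff_one,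
      if_neg (fun h => hm (by simp [h])), smul_zero]

lemma pd_eq_zero_iff_mem_indepOf (v : DVar N) (f : DP N) : pd v f = 0 ↔ f ∈ indepOf v := by
  refine ⟨fun h m hm => ?_, fun h => ext_co fun m => ?_⟩
  · have hle : Finsupp.single v 1 ≤ m := Finsupp.single_le_iff.mpr (Nat.one_le_iff_ne_zero.mpr hm)
    have := congrArg (co · (m - Finsupp.single v 1)) h
    simp only [co_pd, co_zero, tsub_add_cancel_of_le hle, mul_eq_zero] at this
    exact this.resolve_left (by norm_cast)
  · rw [co_pd, co_zero, h _ (by simp), mul_zero]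

/-- `∂_x` only creates variables `u^α_i` with `i ≥ 1`. -/
lemma dx_mem_indepOf {ν : Fin N} {f : DP N} (hf : f ∈ indepOf (Sum.inl (ν, 0))) :
    dx f ∈ indepOf (Sum.inl (ν, 0)) := by
  intro m hm
  rw [co_dx]
  refine Finset.sum_eq_zero fun v _ => ?_
  rcases v with ⟨α, _ | i⟩ | _
  · rfl
  · simp only [dxTerm]
    split_ifs
    · rfl
    · rw [co_pd, hf _ (by simp [Finsupp.single_apply, hm]), mul_zero]
  · rfl

lemma dx_iterate_mem_indepOf {ν : Fin N} {f : DP N} (hf : f ∈ indepOf (Sum.inl (ν, 0)))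
    (n : ℕ) : dx^[n] f ∈ indepOf (Sum.inl (ν, 0)) := by
  induction n with
  | zero => exact hf
  | succ n ih => rw [Function.iterate_succ_apply']; exact dx_mem_indepOf ih

lemma finsum_co_eq_zero_of_mem_indepOf {v : DVar N} {F : ℕ → DP N} (hF : ∀ n, F n ∈ indepOf v)
    {m : DVar N →₀ ℕ} (hm : m v ≠ 0) : ∑ᶠ n, co (F n) m = 0 := by
  simp [hF _ m hm]

lemma Kap_mem_indepOf {ν : Fin N} {K : Fin N → Fin N → ℕ → DP N} {g : Fin N → DP N}
    (hK0 : ∀ γ μ, K γ μ 0 = 0) (hK : ∀ γ μ j, K γ μ j ∈ indepOf (Sum.inl (ν, 0)))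
    (hg : ∀ μ, dx (g μ) ∈ indepOf (Sum.inl (ν, 0))) (γ : Fin N) :
    Kap K γ g ∈ indepOf (Sum.inl (ν, 0)) := by
  refine Subalgebra.sum_mem _ fun μ _ m hm => finsum_co_eq_zero_of_mem_indepOf (fun j => ?_) hm
  rcases j with _ | j
  · simp [hK0]
  · rw [Function.iterate_succ_apply]
    exact mul_mem (hK γ μ _) (dx_iterate_mem_indepOf (hg μ) j)

lemma pbK_mem_indepOf {ν : Fin N} {K : Fin N → Fin N → ℕ → DP N} {f : DP N} {h : LF N}
    (hf : ∀ γ n, pd (Sum.inl (γ, n)) f ∈ indepOf (Sum.inl (ν, 0)))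
    (hK : ∀ γ, Kap K γ (fun μ => vdQ μ h) ∈ indepOf (Sum.inl (ν, 0))) :
    pbK K f h ∈ indepOf (Sum.inl (ν, 0)) := fun m hm => by
  rw [pbK, co_ofCo]
  exact Finset.sum_eq_zero fun γ _ => finsum_co_eq_zero_of_mem_indepOf
    (fun n => mul_mem (hf γ n) (dx_iterate_mem_indepOf (hK γ) n)) hm

end Independence

end DP

open DP in
theorem statement14_general (N : ℕ) [NeZero N] (η : Matrix (Fin N) (Fin N) ℂ)
    (K : Fin N → Fin N → ℕ → DP N)
    (hK0 : ∀ μ ν, K μ ν 0 = 0)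
    (hKu1 : ∀ μ ν j, pd (Sum.inl (0, 0)) (K μ ν j) = 0)
    (g : Fin N → LF N)
    (hg : ∀ μ, pdQ (Sum.inl (0, 0)) (g μ)
      = intg (∑ ν : Fin N, η μ ν • uv ν 0))
    (Q : DP N)
    (hQ1 : IsConst (pd (Sum.inl (0, 0)) Q)) :
    ∀ α : Fin N,
      pd (Sum.inl (0, 0)) (∑ μ : Fin N, η α μ • dx (pbK K Q (g μ))) = 0 := by
  intro α
  have hQ : ∀ γ n, pd (Sum.inl (γ, n)) Q ∈ indepOf (Sum.inl (0, 0)) := fun γ n => by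
    rw [← pd_eq_zero_iff_mem_indepOf, pd_comm]
    exact hQ1.pd_inl_eq_zero _
  have hK : ∀ γ ν j, K γ ν j ∈ indepOf (Sum.inl (0, 0)) := fun γ ν j =>
    (pd_eq_zero_iff_mem_indepOf _ _).mp (hKu1 γ ν j)
  -- `∂/∂u^1` of `δḡ_μ/δu^ν` is the constant `η_{μν}`, which `∂_x` kills.
  have hvd : ∀ μ ν, dx (vdQ ν (g μ)) ∈ indepOf (Sum.inl (0, 0)) := fun μ ν => by
    rw [← pd_eq_zero_iff_mem_indepOf, pd_dx_zero, pd_vdQ_of_pdQ_eq (hg μ), dx_smul,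
      isConst_one.dx_eq_zero, smul_zero]
  rw [pd_eq_zero_iff_mem_indepOf]
  exact Subalgebra.sum_mem _ fun μ _ => Subalgebra.smul_mem _
    (dx_mem_indepOf (pbK_mem_indepOf hQ (Kap_mem_indepOf hK0 hK (hvd μ)))) _

open DP in
/-- the normal Miura shift is independent of `u^1`.  Let
`K` be a hamiltonian operator with vanishing constant term whose coefficients
do not depend on `u^1`, let `ḡ_μ` be local functionals with
`∂ḡ_μ/∂u^1 = ∫ η_{μν}u^ν dx`, and let `𝒬 ∈ Â^{[−2]}_N` be such that `∂𝒬/∂u^1`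
is a constant.  Then `𝒬^α := η^{αμ}∂_x{𝒬, ḡ_μ}_K` satisfies `∂𝒬^α/∂u^1 = 0`
for every `α`. -/
theorem statement14 (N : ℕ) [NeZero N] (η : Matrix (Fin N) (Fin N) ℂ)
    (hsym : η.IsSymm) (hnd : IsUnit η.det)
    (K : Fin N → Fin N → ℕ → DP N) (hham : IsHamOp K)
    (hK0 : ∀ μ ν, K μ ν 0 = 0)
    (hKu1 : ∀ μ ν j, pd (Sum.inl (0, 0)) (K μ ν j) = 0)
    (g : Fin N → LF N)
    (hg : ∀ μ, pdQ (Sum.inl (0, 0)) (g μ)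
      = intg (∑ ν : Fin N, η μ ν • uv ν 0))
    (Q : DP N) (hQ : IsHomog (-2) Q ∧ IsDiffPoly Q)
    (hQ1 : IsConst (pd (Sum.inl (0, 0)) Q)) :
    ∀ α : Fin N,
      pd (Sum.inl (0, 0)) (∑ μ : Fin N, η α μ • dx (pbK K Q (g μ))) = 0 :=
  statement14_general N η K hK0 hKu1 g hg Q hQ1
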